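/- Let (Z_n) be real random variables with Z_n →d* ν. Then for every closed set C ⊆ ℝ and every ε > 0, P( P(Z_n ∈ C | 𝒢_n) < ν(C) + ε ) → 1 as n → ∞. -/

import Mathlib

open MeasureTheory Filter Topology

noncomputable section

/-- Convergence in probability: `P(|X_n - Y| > ε) → 0` for every `ε > 0`. -/
def TendstoInProb {Ω : Type*} [MeasurableSpace Ω] (P : Measure Ω)
    (X : ℕ → Ω → ℝ) (Y : Ω → ℝ) : Prop :=
  ∀ ε : ℝ, 0 < ε → Tendsto (fun n => P {ω | ε < |X n ω - Y ω|}) atTop (nhds 0)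

/-- Conditional probability of the event `A` given the sub-σ-algebra `G`:
`P(A | G) = E[1_A | G]`. -/
def condProb {Ω : Type*} [MeasurableSpace Ω] (P : Measure Ω)
    (G : MeasurableSpace Ω) (A : Set Ω) : Ω → ℝ :=
  P[A.indicator (fun _ => (1 : ℝ)) | G]

/-- Conditional convergence in distribution (in probability), `Z_n →d* ν`:
for every bounded Lipschitz `h : ℝ → ℝ`, `E[h(Z_n) | 𝒢_n] →P ∫ h dν`. -/
def CondConvInDist {Ω : Type*} [MeasurableSpace Ω] (P : Measure Ω)
    (G : ℕ → MeasurableSpace Ω) (Z : ℕ → Ω → ℝ) (ν : Measure ℝ) : Prop :=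
  ∀ h : ℝ → ℝ, (∃ K, LipschitzWith K h) → (∃ C, ∀ x, |h x| ≤ C) →
    TendstoInProb P (fun n => P[(fun ω => h (Z n ω)) | G n]) (fun _ => ∫ x, h x ∂ν)

open Metric in
lemma integrable_of_bdd {Ω : Type*} [MeasurableSpace Ω] {P : Measure Ω}
    [IsFiniteMeasure P] {f : Ω → ℝ} (hf : AEStronglyMeasurable f P) (c : ℝ)
    (h : ∀ x, |f x| ≤ c) : Integrable f P :=
  ⟨hf, HasFiniteIntegral.of_bounded (C := c) (Eventually.of_forall h)⟩

open Metric in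
/-- If `Z_n →d* ν`, then for every closed `C ⊆ ℝ` and `ε > 0`,
`P( P(Z_n ∈ C | 𝒢_n) < ν(C) + ε ) → 1`. -/
theorem stmt3 {Ω : Type*} [m0 : MeasurableSpace Ω] (P : Measure Ω)
    [IsProbabilityMeasure P] (G : ℕ → MeasurableSpace Ω) (hG : ∀ n, G n ≤ m0)
    (Z : ℕ → Ω → ℝ) (hZ : ∀ n, Measurable (Z n))
    (ν : Measure ℝ) [IsProbabilityMeasure ν]
    (hconv : CondConvInDist P G Z ν)
    (C : Set ℝ) (hC : IsClosed C) (ε : ℝ) (hε : 0 < ε) :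
    Tendsto (fun n => P {ω | condProb P (G n) {ω' | Z n ω' ∈ C} ω < (ν C).toReal + ε})
      atTop (nhds 1) := by
  rcases C.eq_empty_or_nonempty with rfl | hCne
  · have : ∀ n, condProb P (G n) {ω' | Z n ω' ∈ (∅ : Set ℝ)} = 0 := by
      intro n
      have h1 : ({ω' | Z n ω' ∈ (∅ : Set ℝ)} : Set Ω).indicator (fun _ => (1:ℝ))
          = (0 : Ω → ℝ) := by
        funext ω; simp
      rw [condProb, h1]
      exact condExp_zero
    have hset : ∀ n, {ω | condProb P (G n) {ω' | Z n ω' ∈ (∅ : Set ℝ)} ω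
        < (ν (∅ : Set ℝ)).toReal + ε} = Set.univ := by
      intro n
      ext ω
      simp only [Set.mem_setOf_eq, Set.mem_univ, iff_true]
      rw [this n]
      simp only [Pi.zero_apply]
      have h2 : (0:ℝ) ≤ (ν (∅ : Set ℝ)).toReal := ENNReal.toReal_nonneg
      linarith
    simp only [hset, measure_univ]
    exact tendsto_const_nhds
  -- choose δ
  set ε' : ℝ := ε / 2 with hε'
  have hε'pos : 0 < ε' := half_pos hε
  have hlt : ν C < ν C + ENNReal.ofReal ε' :=
    ENNReal.lt_add_right (measure_ne_top ν C) (by simp [hε'pos])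
  have htends : Tendsto (fun r => ν (cthickening r C)) (𝓝[>] 0) (𝓝 (ν C)) :=
    (tendsto_measure_cthickening_of_isClosed ⟨1, one_pos, measure_ne_top ν _⟩ hC).mono_left
      nhdsWithin_le_nhds
  obtain ⟨δ, hδlt, hδpos⟩ :=
    ((htends.eventually_lt_const hlt).and self_mem_nhdsWithin).exists
  -- define h
  set h : ℝ → ℝ := fun x => max (1 - δ⁻¹ * infDist x C) 0 with hh
  have hδinv : (0:ℝ) ≤ δ⁻¹ := by positivity
  have h_nonneg : ∀ x, 0 ≤ h x := fun x => le_max_right _ _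
  have h_le_one : ∀ x, h x ≤ 1 := by
    intro x
    have : 0 ≤ δ⁻¹ * infDist x C := mul_nonneg hδinv infDist_nonneg
    simp only [hh, max_le_iff]
    constructor <;> linarith [hε.le]
  have h_bdd : ∀ x, |h x| ≤ 1 := fun x => abs_le.2 ⟨by linarith [h_nonneg x], h_le_one x⟩
  have h_lip : LipschitzWith δ⁻¹.toNNReal h := by
    apply LipschitzWith.of_dist_le_mul
    intro x y
    rw [Real.dist_eq, Real.dist_eq]
    calc |h x - h y| ≤ |(1 - δ⁻¹ * infDist x C) - (1 - δ⁻¹ * infDist y C)| :=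
          abs_max_sub_max_le_abs _ _ _
      _ = δ⁻¹ * |infDist x C - infDist y C| := by
          rw [show (1 - δ⁻¹ * infDist x C) - (1 - δ⁻¹ * infDist y C)
              = δ⁻¹ * (infDist y C - infDist x C) by ring, abs_mul, abs_of_nonneg hδinv,
            abs_sub_comm]
      _ ≤ δ⁻¹ * |x - y| := by
          apply mul_le_mul_of_nonneg_left _ hδinv
          have := (lipschitz_infDist_pt C).dist_le_mul x y
          simpa [Real.dist_eq] using this
      _ = (δ⁻¹.toNNReal : ℝ) * |x - y| := by rw [Real.coe_toNNReal _ hδinv]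
  have h_cont : Continuous h := h_lip.continuous
  -- indicator C ≤ h
  have h_ind_le : ∀ x : ℝ, C.indicator (fun _ => (1:ℝ)) x ≤ h x := by
    intro x
    by_cases hx : x ∈ C
    · rw [Set.indicator_of_mem hx]
      simp [hh, infDist_zero_of_mem hx]
    · rw [Set.indicator_of_notMem hx]
      exact h_nonneg x
  -- h ≤ indicator of cthickening
  have h_le_ind : ∀ x : ℝ, h x ≤ (cthickening δ C).indicator (fun _ => (1:ℝ)) x := by
    intro x
    by_cases hx : x ∈ cthickening δ C
    · rw [Set.indicator_of_mem hx]; exact h_le_one x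
    · rw [Set.indicator_of_notMem hx]
      have hth : x ∉ thickening δ C := fun hmem => hx (thickening_subset_cthickening δ C hmem)
      rw [mem_thickening_iff_infDist_lt hCne, not_lt] at hth
      have : 1 ≤ δ⁻¹ * infDist x C := by
        calc (1:ℝ) = δ⁻¹ * δ := by field_simp
          _ ≤ δ⁻¹ * infDist x C := mul_le_mul_of_nonneg_left hth hδinv
      simp only [hh, max_le_iff]
      constructor <;> linarith
  -- integral bound
  set I : ℝ := ∫ x, h x ∂ν with hI
  have hIbound : I < (ν C).toReal + ε' := by
    have hint1 : Integrable h ν := integrable_of_bdd h_cont.aestronglyMeasurable 1 h_bdd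
    have hint2 : Integrable ((cthickening δ C).indicator (fun _ => (1:ℝ))) ν := by
      refine integrable_of_bdd ?_ 1 ?_
      · exact (StronglyMeasurable.indicator stronglyMeasurable_const
          (isClosed_cthickening.measurableSet)).aestronglyMeasurable
      · intro x
        by_cases hx : x ∈ cthickening δ C <;>
          simp [Set.indicator_of_mem, Set.indicator_of_notMem, hx]
    have h1 : I ≤ ∫ x, (cthickening δ C).indicator (fun _ => (1:ℝ)) x ∂ν :=
      integral_mono hint1 hint2 h_le_ind
    have heq1 : (∫ x, (cthickening δ C).indicator (fun _ => (1:ℝ)) x ∂ν)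
        = (ν (cthickening δ C)).toReal :=
      integral_indicator_one isClosed_cthickening.measurableSet
    rw [heq1] at h1
    have h2 : (ν (cthickening δ C)).toReal < (ν C).toReal + ε' := by
      have := ENNReal.toReal_lt_toReal (measure_ne_top ν _)
        (by finiteness : ν C + ENNReal.ofReal ε' ≠ ⊤) |>.2 hδlt
      rwa [ENNReal.toReal_add (measure_ne_top ν C) ENNReal.ofReal_ne_top,
        ENNReal.toReal_ofReal hε'pos.le] at this
    linarith
  -- apply convergence
  have hkey := hconv h ⟨_, h_lip⟩ ⟨1, h_bdd⟩ ε' hε'pos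
  -- integrability on Ω
  have hintf : ∀ n, Integrable (fun ω => Set.indicator {ω' | Z n ω' ∈ C} (fun _ => (1:ℝ)) ω) P := by
    intro n
    refine integrable_of_bdd ?_ 1 ?_
    · exact (StronglyMeasurable.indicator stronglyMeasurable_const
        ((hZ n) hC.measurableSet)).aestronglyMeasurable
    · intro x
      by_cases hx : x ∈ {ω' | Z n ω' ∈ C} <;>
        simp [Set.indicator_of_mem, Set.indicator_of_notMem, hx]
  have hintg : ∀ n, Integrable (fun ω => h (Z n ω)) P := fun n =>
    integrable_of_bdd (h_cont.measurable.comp (hZ n)).aestronglyMeasurable 1 fun x => h_bdd _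
  have hmono : ∀ n, condProb P (G n) {ω' | Z n ω' ∈ C}
      ≤ᵐ[P] P[(fun ω => h (Z n ω)) | G n] := by
    intro n
    apply condExp_mono (hintf n) (hintg n)
    exact Eventually.of_forall fun ω => h_ind_le (Z n ω)
  -- measurability of the target sets
  set c : ℝ := (ν C).toReal + ε with hc
  have hmeasS : ∀ n, MeasurableSet {ω | condProb P (G n) {ω' | Z n ω' ∈ C} ω < c} := by
    intro n
    exact measurableSet_lt (stronglyMeasurable_condExp.mono (hG n)).measurable measurable_const
  -- complement bound
  have hsub : ∀ n, P ({ω | condProb P (G n) {ω' | Z n ω' ∈ C} ω < c}ᶜ)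
      ≤ P {ω | ε' < |(P[(fun ω => h (Z n ω)) | G n]) ω - I|} := by
    intro n
    apply measure_mono_ae
    filter_upwards [hmono n] with ω hω hmem
    have hmem' : c ≤ condProb P (G n) {ω' | Z n ω' ∈ C} ω := not_lt.1 hmem
    show ε' < |(P[(fun ω => h (Z n ω)) | G n]) ω - I|
    have h1 : c ≤ (P[(fun ω => h (Z n ω)) | G n]) ω := le_trans hmem' hω
    have h2 : ε' < (P[(fun ω => h (Z n ω)) | G n]) ω - I := by
      have hc' : c = (ν C).toReal + ε := hc
      have he' : ε' = ε / 2 := hε'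
      linarith
    exact lt_of_lt_of_le h2 (le_abs_self _)
  have h0 : Tendsto (fun n => P ({ω | condProb P (G n) {ω' | Z n ω' ∈ C} ω < c}ᶜ))
      atTop (𝓝 0) := by
    exact tendsto_of_tendsto_of_tendsto_of_le_of_le tendsto_const_nhds hkey
      (fun n => zero_le) hsub
  have heq : ∀ n, P {ω | condProb P (G n) {ω' | Z n ω' ∈ C} ω < c}
      = 1 - P ({ω | condProb P (G n) {ω' | Z n ω' ∈ C} ω < c}ᶜ) := by
    intro n
    rw [prob_compl_eq_one_sub (hmeasS n)]
    exact (ENNReal.sub_sub_cancel ENNReal.one_ne_top prob_le_one).symm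
  rw [funext heq]
  have := ENNReal.Tendsto.sub (tendsto_const_nhds (x := (1:ENNReal))) h0
    (Or.inl ENNReal.one_ne_top)
  simpa using this
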